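/- Let m, n, p be natural numbers with p ≤ m. Regard C^∞(ℝ^{n+m}) as a C^∞(ℝ^m)-algebra via precomposition with the projection ℝ^{n+m} → ℝ^m onto the first m coordinates, and regard C^∞(ℝ^p) as a C^∞(ℝ^m)-algebra via precomposition with the inclusion ℝ^p → ℝ^m, u ↦ (u, 0), of the coordinate p-plane. Then the C^∞(ℝ^m)-algebra homomorphism C^∞(ℝ^{n+m}) ⊗_{C^∞(ℝ^m)} C^∞(ℝ^p) → C^∞(ℝ^{n+p}) determined on pure tensors by f ⊗ h ↦ ((u, v) ↦ f((u, 0), v) · h(u)), for u ∈ ℝ^p and v ∈ ℝⁿ, is an isomorphism of algebras. -/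

import Mathlib

/-! Restriction `C^∞(ℝᵐ) → C^∞(ℝᵖ)` is surjective (extend constantly in the last `m - p`
coordinates), so every tensor has the form `f ⊗ 1`, which is sent to the restriction of `f` to
`ℝᵖ × ℝⁿ`; this restriction is surjective for the same reason. If it vanishes, Hadamard's lemma
writes `f = ∑ rᵢ gᵢ` with `rᵢ ∈ C^∞(ℝᵐ)` vanishing on `ℝᵖ`, hence
`f ⊗ 1 = ∑ gᵢ ⊗ rᵢ|_{ℝᵖ} = 0`. -/

noncomputable section

/-- The subalgebra of smooth (`C^∞`) real-valued functions on a normed real vector space `E`. -/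
def SmoothAlg (E : Type) [NormedAddCommGroup E] [NormedSpace ℝ E] :
    Subalgebra ℝ (E → ℝ) where
  carrier := {f | ContDiff ℝ (⊤ : ℕ∞) f}
  mul_mem' {a b} ha hb := by
    have ha' : ContDiff ℝ (⊤ : ℕ∞) a := ha
    have hb' : ContDiff ℝ (⊤ : ℕ∞) b := hb
    show ContDiff ℝ (⊤ : ℕ∞) (a * b)
    exact ha'.mul hb'
  add_mem' {a b} ha hb := by
    have ha' : ContDiff ℝ (⊤ : ℕ∞) a := ha
    have hb' : ContDiff ℝ (⊤ : ℕ∞) b := hb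
    show ContDiff ℝ (⊤ : ℕ∞) (a + b)
    exact ha'.add hb'
  algebraMap_mem' r := by
    show ContDiff ℝ (⊤ : ℕ∞) (fun _ => r)
    exact contDiff_const

theorem mem_smoothAlg {E : Type} [NormedAddCommGroup E] [NormedSpace ℝ E]
    {f : E → ℝ} : f ∈ SmoothAlg E ↔ ContDiff ℝ (⊤ : ℕ∞) f := Iff.rfl

/-- The `i`-th coordinate function, as an element of `C^∞(ℝⁿ)`. -/
def coordFn (n : ℕ) (i : Fin n) : SmoothAlg (Fin n → ℝ) :=
  ⟨fun x => x i, mem_smoothAlg.mpr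
    ((ContinuousLinearMap.proj (R := ℝ) (φ := fun _ : Fin n => ℝ) i).contDiff)⟩

/-- The linear inclusion `ℝ^{n-k} → ℝⁿ`, `y ↦ (0, …, 0, y)`, of the coordinate plane
`{x₁ = ⋯ = x_k = 0}`. -/
def planeIncl (n k : ℕ) (hk : k ≤ n) : (Fin (n - k) → ℝ) →L[ℝ] (Fin n → ℝ) :=
  ContinuousLinearMap.pi fun i : Fin n =>
    if _h : (i : ℕ) < k then 0
    else ContinuousLinearMap.proj (R := ℝ) (φ := fun _ : Fin (n - k) => ℝ)
      (⟨(i : ℕ) - k, by omega⟩ : Fin (n - k))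

/-- Precomposition with a fixed smooth map, as a ring homomorphism between rings of
smooth functions. -/
def precompHom {E F : Type} [NormedAddCommGroup E] [NormedSpace ℝ E]
    [NormedAddCommGroup F] [NormedSpace ℝ F] (g : E → F) (hg : ContDiff ℝ (⊤ : ℕ∞) g) :
    SmoothAlg F →+* SmoothAlg E where
  toFun f := ⟨f.1 ∘ g, mem_smoothAlg.mpr ((mem_smoothAlg.mp f.2).comp hg)⟩
  map_one' := rfl
  map_mul' _ _ := rfl
  map_zero' := rfl
  map_add' _ _ := rfl

/-- Restriction of smooth functions on `ℝⁿ` to the coordinate plane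
`{x₁ = ⋯ = x_k = 0} ≅ ℝ^{n-k}`. -/
def restrictHom (n k : ℕ) (hk : k ≤ n) :
    SmoothAlg (Fin n → ℝ) →+* SmoothAlg (Fin (n - k) → ℝ) :=
  precompHom (planeIncl n k hk) (planeIncl n k hk).contDiff

end

noncomputable section

/-- The linear inclusion `ℝᵖ → ℝᵐ`, `u ↦ (u, 0)`, of the coordinate `p`-plane. -/
def coordPlaneIncl (p m : ℕ) (_hp : p ≤ m) : (Fin p → ℝ) →L[ℝ] (Fin m → ℝ) :=
  ContinuousLinearMap.pi fun i : Fin m =>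
    if h : (i : ℕ) < p then
      ContinuousLinearMap.proj (R := ℝ) (φ := fun _ : Fin p => ℝ) (⟨(i : ℕ), h⟩ : Fin p)
    else 0

open scoped ContDiff

universe u

section ParametricIntegral

variable {E F : Type u} [NormedAddCommGroup E] [NormedSpace ℝ E]
  [NormedAddCommGroup F] [NormedSpace ℝ F]

theorem ContDiff.fderiv_partial_fst {n : WithTop ℕ∞} {G : E × ℝ → F} (hG : ContDiff ℝ (n + 1) G) :
    ContDiff ℝ n fun q : E × ℝ => fderiv ℝ (fun y => G (y, q.2)) q.1 :=
  ContDiff.fderiv (f := fun (q : E × ℝ) (y : E) => G (y, q.2))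
    (hG.comp (contDiff_snd.prodMk (contDiff_snd.comp contDiff_fst))) contDiff_fst le_rfl

variable [ProperSpace E]

/-- Differentiation under the integral sign: the derivative is bounded on the compact
`closedBall x₀ 1 ×ˢ [[a, b]]`, which dominates the difference quotients near `x₀`. -/
theorem hasFDerivAt_intervalIntegral_of_contDiff {G : E × ℝ → F} (hG : ContDiff ℝ 1 G)
    (a b : ℝ) (x₀ : E) :
    HasFDerivAt (fun x => ∫ t in a..b, G (x, t))
      (∫ t in a..b, fderiv ℝ (fun y => G (y, t)) x₀) x₀ := by
  have hD : Continuous fun q : E × ℝ => fderiv ℝ (fun y => G (y, q.2)) q.1 :=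
    (ContDiff.fderiv_partial_fst (n := 0) (by simpa using hG)).continuous
  obtain ⟨M, hM⟩ := ((isCompact_closedBall x₀ 1).prod (isCompact_uIcc (a := a) (b := b)))
    |>.exists_bound_of_continuousOn hD.continuousOn
  have hslice : ∀ x, Continuous fun t => G (x, t) := fun x =>
    hG.continuous.comp (continuous_const.prodMk continuous_id)
  refine intervalIntegral.hasFDerivAt_integral_of_dominated_of_fderiv_le (bound := fun _ => M)
    (Metric.ball_mem_nhds x₀ one_pos) (.of_forall fun x => (hslice x).aestronglyMeasurable)
    ((hslice x₀).intervalIntegrable _ _)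
    (hD.comp (continuous_const.prodMk continuous_id)).aestronglyMeasurable
    (.of_forall fun t ht x hx => hM (x, t) ⟨Metric.ball_subset_closedBall hx,
      Set.uIoc_subset_uIcc ht⟩) intervalIntegrable_const
    (.of_forall fun t _ x _ => ?_)
  exact ((hG.comp (contDiff_id.prodMk contDiff_const)).differentiable one_ne_zero x).hasFDerivAt

theorem contDiff_intervalIntegral {n : ℕ} {G : E × ℝ → F} (hG : ContDiff ℝ n G) (a b : ℝ) :
    ContDiff ℝ n fun x => ∫ t in a..b, G (x, t) := by
  induction n generalizing F with
  | zero =>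
    rw [Nat.cast_zero, contDiff_zero] at hG ⊢
    exact intervalIntegral.continuous_parametric_intervalIntegral_of_continuous'
      (f := fun x t => G (x, t)) hG a b
  | succ n ih =>
    have hG1 : ContDiff ℝ 1 G := hG.of_le (by exact_mod_cast Nat.le_add_left 1 n)
    have hderiv := hasFDerivAt_intervalIntegral_of_contDiff hG1 a b
    rw [Nat.cast_succ, contDiff_succ_iff_fderiv]
    refine ⟨fun x => (hderiv x).differentiableAt, by simp, ?_⟩
    rw [funext fun x => (hderiv x).fderiv]
    exact ih (ContDiff.fderiv_partial_fst (by exact_mod_cast hG))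

end ParametricIntegral

section Hadamard

variable {E F : Type u} [NormedAddCommGroup E] [NormedSpace ℝ E]
  [NormedAddCommGroup F] [NormedSpace ℝ F]

def hadamardCoeff (f : E → F) (Q : E → E) (v x : E) : F :=
  ∫ t in (0 : ℝ)..1, fderiv ℝ f (Q x + t • (x - Q x)) v

theorem eq_sum_smul_hadamardCoeff [CompleteSpace F] {f : E → F} (hf : ContDiff ℝ 1 f) {Q : E → E}
    (hfQ : ∀ x, f (Q x) = 0) {ι : Type*} [Fintype ι] (e : ι → E) (r : ι → E → ℝ)
    (hr : ∀ x, x - Q x = ∑ i, r i x • e i) (x : E) :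
    f x = ∑ i, r i x • hadamardCoeff f Q (e i) x := by
  have hint : ∀ i, IntervalIntegrable
      (fun t : ℝ => r i x • fderiv ℝ f (Q x + t • (x - Q x)) (e i)) MeasureTheory.volume 0 1 :=
    fun i => continuous_const.smul
      (((hf.continuous_fderiv one_ne_zero).comp (by fun_prop)).clm_apply continuous_const)
      |>.intervalIntegrable _ _
  calc f x = f (Q x + (x - Q x)) - f (Q x) := by rw [add_sub_cancel, hfQ, sub_zero]
    _ = ∫ t in (0 : ℝ)..1, fderiv ℝ f (Q x + t • (x - Q x)) (x - Q x) := by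
      rw [map_add_eq_sum_add_integral_iteratedFDeriv (n := 0) fun t _ => hf.contDiffAt]
      simp [iteratedFDeriv_one_apply]
    _ = ∫ t in (0 : ℝ)..1, ∑ i, r i x • fderiv ℝ f (Q x + t • (x - Q x)) (e i) := by
      simp only [hr x, map_sum, map_smul]
    _ = ∑ i, r i x • hadamardCoeff f Q (e i) x := by
      rw [intervalIntegral.integral_finsetSum fun i _ => hint i]
      simp only [intervalIntegral.integral_smul, hadamardCoeff]

theorem contDiff_hadamardCoeff [ProperSpace E] {f : E → F} (hf : ContDiff ℝ ∞ f) {Q : E → E}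
    (hQ : ContDiff ℝ ∞ Q) (v : E) : ContDiff ℝ ∞ (hadamardCoeff f Q v) :=
  have hsegment : ContDiff ℝ ∞ fun q : E × ℝ => Q q.1 + q.2 • (q.1 - Q q.1) :=
    (hQ.comp contDiff_fst).add (contDiff_snd.smul (contDiff_fst.sub (hQ.comp contDiff_fst)))
  have hG := ((hf.fderiv_right le_rfl).comp hsegment).clm_apply (contDiff_const (c := v))
  contDiff_infty.mpr fun _ => contDiff_intervalIntegral (hG.of_le (by exact_mod_cast le_top)) 0 1

end Hadamard

open scoped TensorProduct

namespace Algebra.TensorProduct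

variable {R A B C : Type*} [CommRing R] [CommRing A] [CommRing B] [CommRing C]
  [Algebra R A] [Algebra R B] [Algebra R C]

theorem tmul_one_eq_zero_of_mem_map_ker {a : A}
    (ha : a ∈ Ideal.map (algebraMap R A) (RingHom.ker (algebraMap R B))) :
    a ⊗ₜ[R] (1 : B) = 0 := by
  suffices Ideal.map (algebraMap R A) (RingHom.ker (algebraMap R B)) ≤
      RingHom.ker (includeLeft : A →ₐ[R] A ⊗[R] B) from this ha
  refine Ideal.map_le_iff_le_comap.mpr fun r (hr : algebraMap R B r = 0) => ?_
  change algebraMap R A r ⊗ₜ[R] (1 : B) = 0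
  rw [Algebra.algebraMap_eq_smul_one, _root_.TensorProduct.smul_tmul,
    ← Algebra.algebraMap_eq_smul_one, hr, _root_.TensorProduct.tmul_zero]

/-- When `R → B` is surjective, every element of `A ⊗[R] B` has the form `a ⊗ 1`, and `a ⊗ 1`
vanishes as soon as `a` lies in the extension of `ker (R → B)`. -/
theorem productMap_bijective_of_surjective_algebraMap (f : A →ₐ[R] C) (g : B →ₐ[R] C)
    (hB : Function.Surjective (algebraMap R B)) (hf : Function.Surjective f)
    (hker : RingHom.ker f ≤ Ideal.map (algebraMap R A) (RingHom.ker (algebraMap R B))) :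
    Function.Bijective (productMap f g) := by
  have hleft := includeLeft_surjective (S := R) (A := A) hB
  refine ⟨(injective_iff_map_eq_zero _).mpr fun z hz => ?_, fun c => ?_⟩
  · obtain ⟨a, rfl⟩ := hleft z
    rw [includeLeft_apply, productMap_left_apply] at hz
    exact tmul_one_eq_zero_of_mem_map_ker (hker hz)
  · obtain ⟨a, rfl⟩ := hf c
    exact ⟨a ⊗ₜ 1, productMap_left_apply f g a⟩

end Algebra.TensorProduct

section SmoothFunctions

variable {U W V : Type} [NormedAddCommGroup U] [NormedSpace ℝ U] [NormedAddCommGroup W]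
  [NormedSpace ℝ W] [NormedAddCommGroup V] [NormedSpace ℝ V]

theorem precompHom_surjective_of_leftInverse {g : U → W} (hg : ContDiff ℝ ∞ g) {s : W → U}
    (hs : ContDiff ℝ ∞ s) (hsg : Function.LeftInverse s g) :
    Function.Surjective (precompHom g hg) := fun k =>
  ⟨⟨k.1 ∘ s, mem_smoothAlg.mpr ((mem_smoothAlg.mp k.2).comp hs)⟩,
    Subtype.ext (funext fun x => congrArg k.1 (hsg x))⟩

/-- The generators are the coordinates of `w - ι (π w)`: this is Hadamard's lemma for the
retraction `(w, v) ↦ (ι (π w), v)`. -/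
theorem ker_precompHom_prodMk_le_map [FiniteDimensional ℝ W] [FiniteDimensional ℝ V]
    {ι : U → W} (hι : ContDiff ℝ ∞ ι) {π : W → U} (hπ : ContDiff ℝ ∞ π)
    (hπι : Function.LeftInverse π ι) :
    RingHom.ker (precompHom (fun q : U × V => (ι q.1, q.2))
        ((hι.comp contDiff_fst).prodMk contDiff_snd)) ≤
      Ideal.map (precompHom (Prod.fst : W × V → W) contDiff_fst)
        (RingHom.ker (precompHom ι hι)) := by
  intro f hf
  have hfQ : ∀ x : W × V, f.1 (ι (π x.1), x.2) = 0 := fun x =>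
    congrFun (congrArg Subtype.val hf) (π x.1, x.2)
  set b := Module.finBasis ℝ W
  set ρ : W → W := fun w => w - ι (π w)
  have hρ : ContDiff ℝ ∞ ρ := contDiff_id.sub (hι.comp hπ)
  let r : Fin (Module.finrank ℝ W) → SmoothAlg W := fun i =>
    ⟨fun w => b.coord i (ρ w), mem_smoothAlg.mpr
      ((LinearMap.toContinuousLinearMap (b.coord i)).contDiff.comp hρ)⟩
  have hr : ∀ i, r i ∈ RingHom.ker (precompHom ι hι) := fun i => Subtype.ext <| funext fun u =>
    show b.coord i (ι u - ι (π (ι u))) = 0 by rw [hπι u, sub_self, map_zero]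
  let g : Fin (Module.finrank ℝ W) → SmoothAlg (W × V) := fun i =>
    ⟨hadamardCoeff f.1 (fun x => (ι (π x.1), x.2)) (b i, 0), mem_smoothAlg.mpr
      (contDiff_hadamardCoeff (mem_smoothAlg.mp f.2)
        (((hι.comp hπ).comp contDiff_fst).prodMk contDiff_snd) _)⟩
  have hf_eq : f = ∑ i, precompHom Prod.fst contDiff_fst (r i) * g i := by
    refine Subtype.ext (funext fun x => ?_)
    rw [AddSubmonoidClass.coe_finsetSum, Finset.sum_apply]
    refine eq_sum_smul_hadamardCoeff ((mem_smoothAlg.mp f.2).of_le (by exact_mod_cast le_top))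
      hfQ _ (fun i x => b.coord i (ρ x.1)) (fun x => ?_) x
    refine Prod.ext ?_ ?_
    · simp only [Prod.fst_sub, Prod.fst_sum, Prod.smul_fst, Module.Basis.coord_apply]
      exact (b.sum_repr (ρ x.1)).symm
    · simp [Prod.snd_sum]
  rw [hf_eq]
  exact Ideal.sum_mem _ fun i _ => Ideal.mul_mem_right _ _ (Ideal.mem_map_of_mem _ (hr i))

end SmoothFunctions

theorem coordPlaneIncl_leftInverse (p m : ℕ) (hp : p ≤ m) :
    Function.LeftInverse (fun w : Fin m → ℝ => w ∘ Fin.castLE hp) (coordPlaneIncl p m hp) :=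
  fun u => funext fun j => by simp [coordPlaneIncl]

/-- `C^∞(ℝ^{n+m}) ⊗_{C^∞(ℝ^m)} C^∞(ℝ^p) ≅ C^∞(ℝ^{n+p})`: the `C^∞(ℝ^m)`-algebra map
determined on pure tensors by `f ⊗ h ↦ ((u, v) ↦ f((u,0), v) · h(u))` is bijective.
Here `ℝ^{n+m}` is realized as `ℝ^m × ℝ^n` with points `(w, v)`, `C^∞(ℝ^{n+m})` is a
`C^∞(ℝ^m)`-algebra via the projection `(w, v) ↦ w` onto the first `m` coordinates, and
`C^∞(ℝ^p)` is a `C^∞(ℝ^m)`-algebra via the inclusion `u ↦ (u, 0)`. -/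
theorem productMap_tensor_bijective (m n p : ℕ) (hp : p ≤ m) :
    letI : Algebra (SmoothAlg (Fin m → ℝ)) (SmoothAlg ((Fin m → ℝ) × (Fin n → ℝ))) :=
      (precompHom Prod.fst contDiff_fst).toAlgebra
    letI : Algebra (SmoothAlg (Fin m → ℝ)) (SmoothAlg (Fin p → ℝ)) :=
      (precompHom (coordPlaneIncl p m hp) (coordPlaneIncl p m hp).contDiff).toAlgebra
    letI : Algebra (SmoothAlg (Fin m → ℝ)) (SmoothAlg ((Fin p → ℝ) × (Fin n → ℝ))) :=
      (precompHom (fun q : (Fin p → ℝ) × (Fin n → ℝ) => coordPlaneIncl p m hp q.1)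
        ((coordPlaneIncl p m hp).contDiff.comp contDiff_fst)).toAlgebra
    Function.Bijective
      (Algebra.TensorProduct.productMap
        (R := SmoothAlg (Fin m → ℝ))
        (⟨precompHom
            (fun q : (Fin p → ℝ) × (Fin n → ℝ) => (coordPlaneIncl p m hp q.1, q.2))
            (((coordPlaneIncl p m hp).contDiff.comp contDiff_fst).prodMk contDiff_snd),
          fun r => rfl⟩ :
          SmoothAlg ((Fin m → ℝ) × (Fin n → ℝ)) →ₐ[SmoothAlg (Fin m → ℝ)]
            SmoothAlg ((Fin p → ℝ) × (Fin n → ℝ)))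
        (⟨precompHom (Prod.fst : (Fin p → ℝ) × (Fin n → ℝ) → (Fin p → ℝ)) contDiff_fst,
          fun r => rfl⟩ :
          SmoothAlg (Fin p → ℝ) →ₐ[SmoothAlg (Fin m → ℝ)]
            SmoothAlg ((Fin p → ℝ) × (Fin n → ℝ)))) := by
  have hπ : ContDiff ℝ ∞ fun w : Fin m → ℝ => w ∘ Fin.castLE hp :=
    contDiff_pi.2 fun j => contDiff_apply ℝ ℝ (Fin.castLE hp j)
  have hπι := coordPlaneIncl_leftInverse p m hp
  -- The `@` lets the instance arguments be unified with the `letI` instances of the goal.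
  refine @Algebra.TensorProduct.productMap_bijective_of_surjective_algebraMap _ _ _ _ _ _ _ _
    (_) (_) (_) _ _ ?_ ?_ ?_
  · exact precompHom_surjective_of_leftInverse (by fun_prop) hπ hπι
  · exact precompHom_surjective_of_leftInverse (by fun_prop)
      ((hπ.comp contDiff_fst).prodMk contDiff_snd) fun q => Prod.ext (hπι q.1) rfl
  · exact ker_precompHom_prodMk_le_map (coordPlaneIncl p m hp).contDiff hπ hπι

end
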